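/- Let 𝓑 be a finite class of subsets B ⊂ D with 0 < n_B < J for every B ∈ 𝓑, let 𝓑̃ = {D∖B : B ∈ 𝓑}, and assume B ↦ D∖B is injective on 𝓑 and 𝓑 ∩ 𝓑̃ = ∅ (so #(𝓑 ∪ 𝓑̃) = 2·#𝓑). Define U_{𝓑∪𝓑̃}^(1) = 2 log([2(#𝓑)]^{-1} Σ_{B∈𝓑∪𝓑̃} e^{S^(1)(B)}) and U_𝓑^(2) = 2 log((#𝓑)^{-1} Σ_{B∈𝓑} e^{S^(2)(B)}). Then exp(U_𝓑^(2)/2) = 2·exp(U_{𝓑∪𝓑̃}^(1)/2) − 1. -/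

import Mathlib

open Real Finset Classical

/-- `φ(p) = p log(p/p̂₀) + (1−p) log((1−p)/(1−p̂₀))`. -/
noncomputable def phi (q p : ℝ) : ℝ :=
  p * Real.log (p / q) + (1 - p) * Real.log ((1 - p) / (1 - q))

/-- The one-sided log GLR score
`S⁽¹⁾(B) = [n_B φ(m_B/n_B) + (J−n_B) φ((I−m_B)/(J−n_B))]·1{m_B/n_B > p̂₀}`. -/
noncomputable def S1 {α : Type*} (J : ℕ) (x : Fin J → α) (X : Fin J → Bool) (B : Set α) : ℝ :=
  let nB : ℝ := (Finset.univ.filter fun i => x i ∈ B).card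
  let mB : ℝ := (Finset.univ.filter fun i => x i ∈ B ∧ X i = true).card
  let I : ℝ := (Finset.univ.filter fun i => X i = true).card
  let p0 : ℝ := I / (J : ℝ)
  if p0 < mB / nB then
    nB * phi p0 (mB / nB) + ((J : ℝ) - nB) * phi p0 ((I - mB) / ((J : ℝ) - nB))
  else 0

/-- The two-sided log GLR score
`S⁽²⁾(B) = n_B φ(m_B/n_B) + (J−n_B) φ((I−m_B)/(J−n_B))`. -/
noncomputable def S2 {α : Type*} (J : ℕ) (x : Fin J → α) (X : Fin J → Bool) (B : Set α) : ℝ :=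
  let nB : ℝ := (Finset.univ.filter fun i => x i ∈ B).card
  let mB : ℝ := (Finset.univ.filter fun i => x i ∈ B ∧ X i = true).card
  let I : ℝ := (Finset.univ.filter fun i => X i = true).card
  let p0 : ℝ := I / (J : ℝ)
  nB * phi p0 (mB / nB) + ((J : ℝ) - nB) * phi p0 ((I - mB) / ((J : ℝ) - nB))

/-! For each `B`, `e^{S⁽²⁾(B)} = e^{S⁽¹⁾(B)} + e^{S⁽¹⁾(D∖B)} − 1`: the overall rate
`p̂₀ = I/J` is the weighted mean of the rates `m_B/n_B` inside `B` and `(I−m_B)/(J−n_B)` inside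
`D∖B`, so at most one of them exceeds `p̂₀`, and if neither does both equal `p̂₀` and the score
vanishes. Summing over `𝓑` and using that `B ↦ D∖B` is injective with image disjoint from `𝓑`
turns the sum of `e^{S⁽¹⁾}` over `𝓑 ∪ 𝓑̃` into `Σ_𝓑 e^{S⁽²⁾} + #𝓑`. -/

theorem exp_eq_exp_ite_add_exp_ite_sub_one {P Q : Prop} [Decidable P] [Decidable Q] {s : ℝ}
    (hPQ : ¬(P ∧ Q)) (hs : ¬P → ¬Q → s = 0) :
    exp s = exp (if P then s else 0) + exp (if Q then s else 0) - 1 := by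
  by_cases hP : P <;> by_cases hQ : Q <;> simp_all

theorem phi_self (q : ℝ) : phi q q = 0 := by
  simp [phi]

noncomputable def splitScore (J n m I : ℝ) : ℝ :=
  n * phi (I / J) (m / n) + (J - n) * phi (I / J) ((I - m) / (J - n))

theorem splitScore_compl (J n m I : ℝ) : splitScore J (J - n) (I - m) I = splitScore J n m I := by
  simp only [splitScore, sub_sub_cancel]
  ring

theorem weighted_rate_deviation_eq_zero {J n m I : ℝ} (hn : 0 < n) (hnJ : n < J) :
    n * (m / n - I / J) + (J - n) * ((I - m) / (J - n) - I / J) = 0 := by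
  have hJ : J ≠ 0 := by linarith
  have hJn : J - n ≠ 0 := by linarith
  field_simp
  ring

theorem not_lt_and_lt_rates {J n m I : ℝ} (hn : 0 < n) (hnJ : n < J) :
    ¬(I / J < m / n ∧ I / J < (I - m) / (J - n)) := by
  rintro ⟨h₁, h₂⟩
  have := weighted_rate_deviation_eq_zero (m := m) (I := I) hn hnJ
  nlinarith [mul_pos hn (sub_pos.2 h₁), mul_pos (sub_pos.2 hnJ) (sub_pos.2 h₂)]

theorem splitScore_eq_zero_of_rates_le {J n m I : ℝ} (hn : 0 < n) (hnJ : n < J)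
    (h₁ : ¬I / J < m / n) (h₂ : ¬I / J < (I - m) / (J - n)) : splitScore J n m I = 0 := by
  push Not at h₁ h₂
  have := weighted_rate_deviation_eq_zero (m := m) (I := I) hn hnJ
  have hdev₁ : n * (m / n - I / J) ≤ 0 := mul_nonpos_of_nonneg_of_nonpos hn.le (sub_nonpos.2 h₁)
  have hdev₂ : (J - n) * ((I - m) / (J - n) - I / J) ≤ 0 :=
    mul_nonpos_of_nonneg_of_nonpos (sub_pos.2 hnJ).le (sub_nonpos.2 h₂)
  have e₁ : m / n = I / J := sub_eq_zero.1 <|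
    (mul_eq_zero.1 (le_antisymm hdev₁ (by linarith))).resolve_left hn.ne'
  have e₂ : (I - m) / (J - n) = I / J := sub_eq_zero.1 <|
    (mul_eq_zero.1 (le_antisymm hdev₂ (by linarith))).resolve_left (sub_pos.2 hnJ).ne'
  simp only [splitScore, e₁, e₂, phi_self, mul_zero, add_zero]

theorem exp_splitScore {J n m I : ℝ} (hn : 0 < n) (hnJ : n < J) :
    exp (splitScore J n m I) = exp (if I / J < m / n then splitScore J n m I else 0)
      + exp (if I / J < (I - m) / (J - n) then splitScore J (J - n) (I - m) I else 0) - 1 := by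
  rw [splitScore_compl]
  exact exp_eq_exp_ite_add_exp_ite_sub_one (not_lt_and_lt_rates hn hnJ)
    (splitScore_eq_zero_of_rates_le hn hnJ)

section Complement

variable {α : Type*} {J : ℕ} {D : Set α} {x : Fin J → α}

theorem card_filter_mem_diff (hxD : ∀ i, x i ∈ D) (B : Set α)
    [DecidablePred fun i => x i ∈ D \ B] :
    ((univ.filter fun i => x i ∈ D \ B).card : ℝ) = J - (univ.filter fun i => x i ∈ B).card := by
  have hsplit := card_filter_add_card_filter_not (s := (univ : Finset (Fin J))) (fun i => x i ∈ B)
  have hdiff : (univ.filter fun i => x i ∈ D \ B) = univ.filter fun i => x i ∉ B :=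
    filter_congr fun i _ => by simp [hxD i]
  rw [hdiff, eq_sub_iff_add_eq', ← Nat.cast_add, hsplit, card_univ, Fintype.card_fin]

theorem card_filter_mem_diff_and (hxD : ∀ i, x i ∈ D) (X : Fin J → Bool) (B : Set α)
    [DecidablePred fun i => x i ∈ D \ B ∧ X i = true] :
    ((univ.filter fun i => x i ∈ D \ B ∧ X i = true).card : ℝ)
      = (univ.filter fun i => X i = true).card
        - (univ.filter fun i => x i ∈ B ∧ X i = true).card := by
  have hsplit :=
    card_filter_add_card_filter_not (s := univ.filter fun i => X i = true) (fun i => x i ∈ B)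
  simp only [filter_filter] at hsplit
  have hdiff : (univ.filter fun i => x i ∈ D \ B ∧ X i = true)
      = univ.filter fun i => X i = true ∧ x i ∉ B :=
    filter_congr fun i _ => by simp [hxD i, and_comm]
  have hB : (univ.filter fun i => x i ∈ B ∧ X i = true)
      = univ.filter fun i => X i = true ∧ x i ∈ B :=
    filter_congr fun i _ => and_comm
  rw [hdiff, hB, eq_sub_iff_add_eq', ← Nat.cast_add, hsplit]

theorem exp_S2_eq_exp_S1_add_exp_S1_diff_sub_one (hxD : ∀ i, x i ∈ D) (X : Fin J → Bool)
    {B : Set α} (hn : 0 < (univ.filter fun i => x i ∈ B).card)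
    (hnJ : (univ.filter fun i => x i ∈ B).card < J) :
    exp (S2 J x X B) = exp (S1 J x X B) + exp (S1 J x X (D \ B)) - 1 := by
  have hsplit := exp_splitScore (m := (univ.filter fun i => x i ∈ B ∧ X i = true).card)
    (I := (univ.filter fun i => X i = true).card)
    (Nat.cast_pos.2 hn : (0 : ℝ) < _) (Nat.cast_lt.2 hnJ : (_ : ℝ) < J)
  simpa only [S1, S2, splitScore, card_filter_mem_diff hxD, card_filter_mem_diff_and hxD]
    using hsplit

theorem sum_exp_S1_union_image_diff (hxD : ∀ i, x i ∈ D) (X : Fin J → Bool) {𝓑 : Finset (Set α)}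
    (hn : ∀ B ∈ 𝓑, 0 < (univ.filter fun i => x i ∈ B).card ∧
      (univ.filter fun i => x i ∈ B).card < J)
    (hinj : Set.InjOn (fun B => D \ B) ↑𝓑) (hdisj : Disjoint 𝓑 (𝓑.image fun B => D \ B)) :
    ∑ B ∈ 𝓑 ∪ 𝓑.image (fun B => D \ B), exp (S1 J x X B)
      = ∑ B ∈ 𝓑, exp (S2 J x X B) + 𝓑.card := by
  have hpair : ∀ B ∈ 𝓑, exp (S1 J x X B) + exp (S1 J x X (D \ B)) = exp (S2 J x X B) + 1 :=
    fun B hB => by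
      rw [exp_S2_eq_exp_S1_add_exp_S1_diff_sub_one hxD X (hn B hB).1 (hn B hB).2]
      ring
  rw [sum_union hdisj, sum_image fun B hB C hC h => hinj hB hC h, ← sum_add_distrib,
    sum_congr rfl hpair, sum_add_distrib, sum_const, nsmul_one]

end Complement

theorem exp_two_sided_alr_identity_general {α : Type*}
    (J : ℕ) (D : Set α) (x : Fin J → α) (hxD : ∀ i, x i ∈ D) (X : Fin J → Bool)
    (𝓑 : Finset (Set α))
    (hn : ∀ B ∈ 𝓑, 0 < (Finset.univ.filter fun i => x i ∈ B).card ∧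
      (Finset.univ.filter fun i => x i ∈ B).card < J)
    (hinj : Set.InjOn (fun B => D \ B) ↑𝓑)
    (hdisj : 𝓑 ∩ 𝓑.image (fun B => D \ B) = ∅) :
    Real.exp ((2 * Real.log ((𝓑.card : ℝ)⁻¹ * ∑ B ∈ 𝓑, Real.exp (S2 J x X B))) / 2)
      = 2 * Real.exp ((2 * Real.log ((2 * (𝓑.card : ℝ))⁻¹ *
          ∑ B ∈ 𝓑 ∪ 𝓑.image (fun B => D \ B), Real.exp (S1 J x X B))) / 2) - 1 := by
  rcases 𝓑.eq_empty_or_nonempty with rfl | h𝓑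
  · norm_num
  have hcard : (0 : ℝ) < 𝓑.card := Nat.cast_pos.2 h𝓑.card_pos
  have hS2 : 0 < ∑ B ∈ 𝓑, exp (S2 J x X B) := sum_pos (fun B _ => exp_pos _) h𝓑
  rw [sum_exp_S1_union_image_diff hxD X hn hinj (disjoint_iff_inter_eq_empty.2 hdisj),
    mul_div_cancel_left₀ _ two_ne_zero, mul_div_cancel_left₀ _ two_ne_zero,
    exp_log (by positivity), exp_log (by positivity)]
  field_simp
  ring

/-- The identity relating the two-sided ALR statistic to the one-sided ALR statistic over
the enlarged class `𝓑 ∪ 𝓑̃`, `𝓑̃ = {D∖B : B ∈ 𝓑}`: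
`exp(U_𝓑⁽²⁾/2) = 2·exp(U_{𝓑∪𝓑̃}⁽¹⁾/2) − 1`. -/
theorem exp_two_sided_alr_identity {α : Type*}
    (J : ℕ) (D : Set α) (x : Fin J → α) (hxD : ∀ i, x i ∈ D) (X : Fin J → Bool)
    (𝓑 : Finset (Set α)) (hBD : ∀ B ∈ 𝓑, B ⊆ D)
    (hn : ∀ B ∈ 𝓑, 0 < (Finset.univ.filter fun i => x i ∈ B).card ∧
      (Finset.univ.filter fun i => x i ∈ B).card < J)
    (hinj : Set.InjOn (fun B => D \ B) ↑𝓑)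
    (hdisj : 𝓑 ∩ 𝓑.image (fun B => D \ B) = ∅)
    (hcard : (𝓑 ∪ 𝓑.image (fun B => D \ B)).card = 2 * 𝓑.card) :
    Real.exp ((2 * Real.log ((𝓑.card : ℝ)⁻¹ * ∑ B ∈ 𝓑, Real.exp (S2 J x X B))) / 2)
      = 2 * Real.exp ((2 * Real.log ((2 * (𝓑.card : ℝ))⁻¹ *
          ∑ B ∈ 𝓑 ∪ 𝓑.image (fun B => D \ B), Real.exp (S1 J x X B))) / 2) - 1 :=
  exp_two_sided_alr_identity_general J D x hxD X 𝓑 hn hinj hdisj
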